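/- For every n ≥ 0 there exists an indecomposable representation M of Q with dimension vector (n+1, n+1, n, n+1) together with a short exact sequence of representations 0 → P₃ ⊕ P₄ⁿ → P₁ⁿ⁺¹ → M → 0. -/

import Mathlib

variable (k : Type) [Field k]

/-- A finite-dimensional representation of the quiver `Q` with vertices `1,2,3,4`
and arrows `a : 1 → 2`, `b : 1 → 3`, `c : 2 → 4`, `d : 3 → 4`. -/
structure QRep where
  V1 : Type
  V2 : Type
  V3 : Type
  V4 : Type
  [acg1 : AddCommGroup V1]
  [acg2 : AddCommGroup V2]
  [acg3 : AddCommGroup V3]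
  [acg4 : AddCommGroup V4]
  [mod1 : Module k V1]
  [mod2 : Module k V2]
  [mod3 : Module k V3]
  [mod4 : Module k V4]
  [fin1 : FiniteDimensional k V1]
  [fin2 : FiniteDimensional k V2]
  [fin3 : FiniteDimensional k V3]
  [fin4 : FiniteDimensional k V4]
  ma : V1 →ₗ[k] V2
  mb : V1 →ₗ[k] V3
  mc : V2 →ₗ[k] V4
  md : V3 →ₗ[k] V4

attribute [instance] QRep.acg1 QRep.acg2 QRep.acg3 QRep.acg4
  QRep.mod1 QRep.mod2 QRep.mod3 QRep.mod4
  QRep.fin1 QRep.fin2 QRep.fin3 QRep.fin4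

variable {k}

/-- Morphisms of representations of `Q`. -/
@[ext]
structure QHom (M N : QRep k) where
  f1 : M.V1 →ₗ[k] N.V1
  f2 : M.V2 →ₗ[k] N.V2
  f3 : M.V3 →ₗ[k] N.V3
  f4 : M.V4 →ₗ[k] N.V4
  comm_a : f2 ∘ₗ M.ma = N.ma ∘ₗ f1
  comm_b : f3 ∘ₗ M.mb = N.mb ∘ₗ f1
  comm_c : f4 ∘ₗ M.mc = N.mc ∘ₗ f2
  comm_d : f4 ∘ₗ M.md = N.md ∘ₗ f3

/-- Two representations are isomorphic iff there is a morphism all of whose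
components are bijective. -/
def QIso (M N : QRep k) : Prop :=
  ∃ f : QHom M N, Function.Bijective f.f1 ∧ Function.Bijective f.f2 ∧
    Function.Bijective f.f3 ∧ Function.Bijective f.f4

/-- The zero representation(s). -/
def QRep.IsZeroRep (M : QRep k) : Prop :=
  Subsingleton M.V1 ∧ Subsingleton M.V2 ∧ Subsingleton M.V3 ∧ Subsingleton M.V4

/-- Vertexwise direct sum of representations. -/
def QRep.dsum (M N : QRep k) : QRep k where
  V1 := M.V1 × N.V1
  V2 := M.V2 × N.V2
  V3 := M.V3 × N.V3
  V4 := M.V4 × N.V4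
  ma := M.ma.prodMap N.ma
  mb := M.mb.prodMap N.mb
  mc := M.mc.prodMap N.mc
  md := M.md.prodMap N.md

/-- Direct sum of `n` copies of a representation. -/
def QRep.dpow (M : QRep k) (n : ℕ) : QRep k where
  V1 := Fin n → M.V1
  V2 := Fin n → M.V2
  V3 := Fin n → M.V3
  V4 := Fin n → M.V4
  ma := M.ma.compLeft (Fin n)
  mb := M.mb.compLeft (Fin n)
  mc := M.mc.compLeft (Fin n)
  md := M.md.compLeft (Fin n)

/-- A representation is indecomposable if it is nonzero and not isomorphic to a
direct sum of two nonzero representations. -/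
def QRep.Indecomposable (M : QRep k) : Prop :=
  ¬ M.IsZeroRep ∧ ∀ A B : QRep k, QIso M (A.dsum B) → A.IsZeroRep ∨ B.IsZeroRep

/-- `0 → A → B → C → 0` is short exact (vertexwise). -/
def QShortExact {A B C : QRep k} (f : QHom A B) (g : QHom B C) : Prop :=
  (Function.Injective f.f1 ∧ Function.Injective f.f2 ∧
    Function.Injective f.f3 ∧ Function.Injective f.f4) ∧
  (Function.Surjective g.f1 ∧ Function.Surjective g.f2 ∧
    Function.Surjective g.f3 ∧ Function.Surjective g.f4) ∧
  (LinearMap.range f.f1 = LinearMap.ker g.f1 ∧ LinearMap.range f.f2 = LinearMap.ker g.f2 ∧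
    LinearMap.range f.f3 = LinearMap.ker g.f3 ∧ LinearMap.range f.f4 = LinearMap.ker g.f4)

variable (k)

/-- The `n×n` Jordan block with eigenvalue `lam`, as a linear endomorphism of `kⁿ`. -/
def jordan (n : ℕ) (lam : k) : (Fin n → k) →ₗ[k] (Fin n → k) :=
  Matrix.mulVecLin (Matrix.of fun i j : Fin n =>
    if i = j then lam else if (i : ℕ) + 1 = (j : ℕ) then 1 else 0)

/-- The representation `M_n(λ) = (kⁿ,kⁿ,kⁿ,kⁿ; id,id,id,J_n(λ))`. -/
def Mlam (n : ℕ) (lam : k) : QRep k where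
  V1 := Fin n → k
  V2 := Fin n → k
  V3 := Fin n → k
  V4 := Fin n → k
  ma := LinearMap.id
  mb := LinearMap.id
  mc := LinearMap.id
  md := jordan k n lam

/-- The indecomposable projective `P₁ = (k,k,k,k²)`. -/
def P1 : QRep k where
  V1 := k
  V2 := k
  V3 := k
  V4 := k × k
  ma := LinearMap.id
  mb := LinearMap.id
  mc := LinearMap.inl k k k
  md := LinearMap.inr k k k

/-- The indecomposable projective `P₂ = (0,k,0,k)`. -/
def P2 : QRep k where
  V1 := Fin 0 → k
  V2 := k
  V3 := Fin 0 → k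
  V4 := k
  ma := 0
  mb := 0
  mc := LinearMap.id
  md := 0

/-- The indecomposable projective `P₃ = (0,0,k,k)`. -/
def P3 : QRep k where
  V1 := Fin 0 → k
  V2 := Fin 0 → k
  V3 := k
  V4 := k
  ma := 0
  mb := 0
  mc := 0
  md := LinearMap.id

/-- The indecomposable projective `P₄ = (0,0,0,k)`. -/
def P4 : QRep k where
  V1 := Fin 0 → k
  V2 := Fin 0 → k
  V3 := Fin 0 → k
  V4 := k
  ma := 0
  mb := 0
  mc := 0
  md := 0

/-
Take `M = (kⁿ⁺¹, kⁿ⁺¹, kⁿ, kⁿ⁺¹)` with `a = c = id`, `b(x₀, …, xₙ) = (x₁, …, xₙ)` and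
`d(y₀, …, yₙ₋₁) = (y₀, …, yₙ₋₁, 0)`. An endomorphism of `M` is determined by its component at
vertex 1, and that component commutes with the nilpotent shift `N = d ∘ b`, whose kernel is the
line through the first basis vector `δ`. A suitable power of `N` moves any nonzero vector onto a
nonzero multiple of `δ`, so an idempotent commuting with `N` that fixes (resp. kills) some
nonzero vector fixes (resp. kills) `δ`; it cannot do both, hence it is `0` or `1`, and `M` is
indecomposable.

The epimorphism `P₁ⁿ⁺¹ → M` is the identity at vertices 1 and 2, `b` at vertex 3 and
`(x, y) ↦ x + N y` at vertex 4. Its kernel is `k δ` at vertex 3 and the graph `{(-N y, y)}`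
at vertex 4, i.e. a copy of `P₃ ⊕ P₄ⁿ`.
-/

variable {k}

lemma LinearEquiv.symm_comp_eq_comp_symm {R V₁ V₂ W₁ W₂ : Type*} [Semiring R]
    [AddCommMonoid V₁] [AddCommMonoid V₂] [AddCommMonoid W₁] [AddCommMonoid W₂]
    [Module R V₁] [Module R V₂] [Module R W₁] [Module R W₂]
    {e₁ : V₁ ≃ₗ[R] W₁} {e₂ : V₂ ≃ₗ[R] W₂} {μ : V₁ →ₗ[R] V₂} {ν : W₁ →ₗ[R] W₂}
    (h : e₂.toLinearMap ∘ₗ μ = ν ∘ₗ e₁.toLinearMap) :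
    e₂.symm.toLinearMap ∘ₗ ν = μ ∘ₗ e₁.symm.toLinearMap := by
  ext x
  apply e₂.injective
  simpa using (LinearMap.congr_fun h (e₁.symm x)).symm

namespace QHom

variable {M N P : QRep k}

@[simps]
def id (M : QRep k) : QHom M M :=
  ⟨LinearMap.id, LinearMap.id, LinearMap.id, LinearMap.id, rfl, rfl, rfl, rfl⟩

@[simps]
def comp (g : QHom N P) (f : QHom M N) : QHom M P where
  f1 := g.f1 ∘ₗ f.f1
  f2 := g.f2 ∘ₗ f.f2
  f3 := g.f3 ∘ₗ f.f3
  f4 := g.f4 ∘ₗ f.f4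
  comm_a := by
    rw [LinearMap.comp_assoc, f.comm_a, ← LinearMap.comp_assoc, g.comm_a, LinearMap.comp_assoc]
  comm_b := by
    rw [LinearMap.comp_assoc, f.comm_b, ← LinearMap.comp_assoc, g.comm_b, LinearMap.comp_assoc]
  comm_c := by
    rw [LinearMap.comp_assoc, f.comm_c, ← LinearMap.comp_assoc, g.comm_c, LinearMap.comp_assoc]
  comm_d := by
    rw [LinearMap.comp_assoc, f.comm_d, ← LinearMap.comp_assoc, g.comm_d, LinearMap.comp_assoc]

instance : Zero (QHom M N) :=
  ⟨⟨0, 0, 0, 0, by simp, by simp, by simp, by simp⟩⟩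

@[simp] lemma zero_f1 : (0 : QHom M N).f1 = 0 := rfl
@[simp] lemma zero_f2 : (0 : QHom M N).f2 = 0 := rfl
@[simp] lemma zero_f3 : (0 : QHom M N).f3 = 0 := rfl
@[simp] lemma zero_f4 : (0 : QHom M N).f4 = 0 := rfl

open Function in
@[simps]
noncomputable def invOfBijective (f : QHom M N) (h1 : Bijective f.f1) (h2 : Bijective f.f2)
    (h3 : Bijective f.f3) (h4 : Bijective f.f4) : QHom N M where
  f1 := (LinearEquiv.ofBijective f.f1 h1).symm
  f2 := (LinearEquiv.ofBijective f.f2 h2).symm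
  f3 := (LinearEquiv.ofBijective f.f3 h3).symm
  f4 := (LinearEquiv.ofBijective f.f4 h4).symm
  comm_a := LinearEquiv.symm_comp_eq_comp_symm f.comm_a
  comm_b := LinearEquiv.symm_comp_eq_comp_symm f.comm_b
  comm_c := LinearEquiv.symm_comp_eq_comp_symm f.comm_c
  comm_d := LinearEquiv.symm_comp_eq_comp_symm f.comm_d

end QHom

namespace QRep

variable {A B : QRep k}

variable (A B) in
def projFst : QHom (A.dsum B) (A.dsum B) where
  f1 := LinearMap.inl k _ _ ∘ₗ LinearMap.fst k _ _
  f2 := LinearMap.inl k _ _ ∘ₗ LinearMap.fst k _ _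
  f3 := LinearMap.inl k _ _ ∘ₗ LinearMap.fst k _ _
  f4 := LinearMap.inl k _ _ ∘ₗ LinearMap.fst k _ _
  comm_a := LinearMap.ext fun _ => Prod.ext rfl (map_zero B.ma).symm
  comm_b := LinearMap.ext fun _ => Prod.ext rfl (map_zero B.mb).symm
  comm_c := LinearMap.ext fun _ => Prod.ext rfl (map_zero B.mc).symm
  comm_d := LinearMap.ext fun _ => Prod.ext rfl (map_zero B.md).symm

lemma projFst_comp_self : (A.projFst B).comp (A.projFst B) = A.projFst B := rfl

lemma isZeroRep_of_projFst_eq_zero (h : A.projFst B = 0) : A.IsZeroRep :=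
  ⟨subsingleton_of_forall_eq 0 fun a =>
      congrArg Prod.fst (LinearMap.congr_fun (congrArg QHom.f1 h) (a, 0)),
    subsingleton_of_forall_eq 0 fun a =>
      congrArg Prod.fst (LinearMap.congr_fun (congrArg QHom.f2 h) (a, 0)),
    subsingleton_of_forall_eq 0 fun a =>
      congrArg Prod.fst (LinearMap.congr_fun (congrArg QHom.f3 h) (a, 0)),
    subsingleton_of_forall_eq 0 fun a =>
      congrArg Prod.fst (LinearMap.congr_fun (congrArg QHom.f4 h) (a, 0))⟩

lemma isZeroRep_of_projFst_eq_id (h : A.projFst B = QHom.id _) : B.IsZeroRep :=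
  ⟨subsingleton_of_forall_eq 0 fun b =>
      (congrArg Prod.snd (LinearMap.congr_fun (congrArg QHom.f1 h) (0, b))).symm,
    subsingleton_of_forall_eq 0 fun b =>
      (congrArg Prod.snd (LinearMap.congr_fun (congrArg QHom.f2 h) (0, b))).symm,
    subsingleton_of_forall_eq 0 fun b =>
      (congrArg Prod.snd (LinearMap.congr_fun (congrArg QHom.f3 h) (0, b))).symm,
    subsingleton_of_forall_eq 0 fun b =>
      (congrArg Prod.snd (LinearMap.congr_fun (congrArg QHom.f4 h) (0, b))).symm⟩

theorem indecomposable_of_forall_idempotent {M : QRep k} (hM : ¬ M.IsZeroRep)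
    (h : ∀ e : QHom M M, e.comp e = e → e = 0 ∨ e = QHom.id M) : M.Indecomposable := by
  refine ⟨hM, fun A B ⟨φ, h1, h2, h3, h4⟩ => ?_⟩
  set ψ := φ.invOfBijective h1 h2 h3 h4
  set e := ψ.comp ((A.projFst B).comp φ)
  have he : e.comp e = e := calc
    e.comp e = ψ.comp (((A.projFst B).comp (A.projFst B)).comp φ) := by ext <;> simp [e, ψ]
    _ = e := by rw [projFst_comp_self]
  have hφeψ : φ.comp (e.comp ψ) = A.projFst B := by ext <;> simp [e, ψ]
  rcases h e he with h0 | hid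
  · exact Or.inl (isZeroRep_of_projFst_eq_zero (by rw [← hφeψ, h0]; ext <;> simp))
  · exact Or.inr (isZeroRep_of_projFst_eq_id (by rw [← hφeψ, hid]; ext <;> simp [ψ]))

end QRep

namespace Module.End

theorem exists_pow_apply_ne_zero_of_isNilpotent {R V : Type*} [Semiring R] [AddCommMonoid V]
    [Module R V] {N : Module.End R V} (hN : IsNilpotent N) {x : V} (hx : x ≠ 0) :
    ∃ m : ℕ, (N ^ m) x ≠ 0 ∧ N ((N ^ m) x) = 0 := by
  classical
  have hex : ∃ m, (N ^ (m + 1)) x = 0 := by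
    obtain ⟨r, hr⟩ := hN
    exact ⟨r, by rw [pow_succ, mul_apply, hr, LinearMap.zero_apply]⟩
  refine ⟨Nat.find hex, ?_, by rw [← mul_apply, ← pow_succ']; exact Nat.find_spec hex⟩
  cases hm : Nat.find hex with
  | zero => simpa using hx
  | succ j => exact Nat.find_min hex (by omega)

theorem eq_zero_or_eq_one_of_isIdempotentElem {K V : Type*} [Field K] [AddCommGroup V]
    [Module K V] {N f : Module.End K V} (hN : IsNilpotent N) {δ : V}
    (hker : LinearMap.ker N ≤ K ∙ δ) (hf : IsIdempotentElem f) (hfN : Commute f N) :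
    f = 0 ∨ f = 1 := by
  have eigen_δ : ∀ x ≠ 0, ∀ a : K, f x = a • x → δ ≠ 0 ∧ f δ = a • δ := by
    intro x hx a hfx
    obtain ⟨m, hm, hNm⟩ := exists_pow_apply_ne_zero_of_isNilpotent hN hx
    obtain ⟨c, hc⟩ := Submodule.mem_span_singleton.mp (hker hNm)
    have hcδ : c • δ ≠ 0 := hc ▸ hm
    refine ⟨right_ne_zero_of_smul hcδ, smul_right_injective V (left_ne_zero_of_smul hcδ) ?_⟩
    show c • f δ = c • a • δ
    rw [← map_smul, hc, ← mul_apply, (hfN.pow_right m).eq, mul_apply, hfx, map_smul, ← hc,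
      smul_comm]
  by_contra! hne
  obtain ⟨y, hy⟩ : ∃ y, f y ≠ 0 := by
    by_contra! h
    exact hne.1 (LinearMap.ext h)
  obtain ⟨z, hz⟩ : ∃ z, f z ≠ z := by
    by_contra! h
    exact hne.2 (LinearMap.ext h)
  obtain ⟨hδ, hfix⟩ := eigen_δ (f y) hy 1 (by rw [one_smul, ← mul_apply, hf.eq])
  obtain ⟨-, hkill⟩ := eigen_δ (z - f z) (sub_ne_zero.mpr hz.symm) 0
    (by rw [zero_smul, map_sub, ← mul_apply, hf.eq, sub_self])
  exact hδ (by rw [← one_smul K δ, ← hfix, hkill, zero_smul])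

end Module.End

section Shift

variable {n : ℕ}

variable (k n) in
def finTail : (Fin (n + 1) → k) →ₗ[k] (Fin n → k) :=
  LinearMap.funLeft k k Fin.succ

variable (k n) in
noncomputable def finShift : Module.End k (Fin (n + 1) → k) :=
  Function.ExtendByZero.linearMap k Fin.castSucc ∘ₗ finTail k n

lemma finTail_surjective : Function.Surjective (finTail k n) :=
  LinearMap.funLeft_surjective_of_injective _ _ _ (Fin.succ_injective n)

lemma finTail_cons_zero (t : k) : finTail k n (Fin.cons t 0) = 0 :=
  funext fun j => Fin.cons_succ (α := fun _ => k) (x := t) (p := 0) (i := j)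

lemma ker_finTail : LinearMap.ker (finTail k n) =
    LinearMap.range ((Fin.consLinearEquiv k fun _ => k).toLinearMap ∘ₗ LinearMap.inl k k _) := by
  ext x
  rw [LinearMap.mem_ker, LinearMap.mem_range]
  constructor
  · intro hx
    refine ⟨x 0, ?_⟩
    change Fin.cons (x 0) 0 = x
    rw [← hx]
    exact Fin.cons_self_tail x
  · rintro ⟨t, rfl⟩
    exact finTail_cons_zero t

@[simp] lemma finShift_apply_castSucc (x : Fin (n + 1) → k) (i : Fin n) :
    finShift k n x i.castSucc = x i.succ := by
  simp [finShift, finTail, Fin.castSucc_injective _ |>.extend_apply]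

@[simp] lemma finShift_apply_last (x : Fin (n + 1) → k) : finShift k n x (Fin.last n) = 0 := by
  simp [finShift, Function.extend_apply', Fin.castSucc_ne_last]

lemma finShift_cons_zero (t : k) : finShift k n (Fin.cons t 0) = 0 := by
  rw [finShift, LinearMap.comp_apply, finTail_cons_zero, map_zero]

lemma finShift_pow_apply_eq_zero (m : ℕ) (x : Fin (n + 1) → k) (i : Fin (n + 1))
    (hi : n < i + m) : (finShift k n ^ m) x i = 0 := by
  induction m generalizing i with
  | zero => omega
  | succ m ih =>
    rw [pow_succ', Module.End.mul_apply]
    induction i using Fin.lastCases with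
    | last => exact finShift_apply_last _
    | cast i =>
      rw [finShift_apply_castSucc]
      exact ih _ (by simp only [Fin.val_castSucc, Fin.val_succ] at hi ⊢; omega)

lemma isNilpotent_finShift : IsNilpotent (finShift k n) :=
  ⟨n + 1, LinearMap.ext fun x => funext fun i => finShift_pow_apply_eq_zero _ x i (by omega)⟩

lemma ker_finShift_le : LinearMap.ker (finShift k n) ≤ k ∙ Pi.single 0 1 := by
  intro x hx
  refine Submodule.mem_span_singleton.mpr ⟨x 0, funext fun i => ?_⟩
  induction i using Fin.cases with
  | zero => simp
  | succ i => simpa using (congrFun hx i.castSucc).symm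

variable (k n) in
noncomputable def shiftGraph : (Fin (n + 1) → k) →ₗ[k] (Fin (n + 1) → k × k) :=
  LinearMap.pi fun i => (LinearMap.proj i ∘ₗ (-finShift k n)).prod (LinearMap.proj i)

variable (k n) in
noncomputable def shiftSum : (Fin (n + 1) → k × k) →ₗ[k] (Fin (n + 1) → k) :=
  (LinearMap.fst k k k).compLeft _ + finShift k n ∘ₗ (LinearMap.snd k k k).compLeft _

@[simp] lemma shiftGraph_apply (y : Fin (n + 1) → k) (i : Fin (n + 1)) :
    shiftGraph k n y i = (-finShift k n y i, y i) := rfl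

lemma shiftSum_apply (x : Fin (n + 1) → k × k) :
    shiftSum k n x = (fun i => (x i).1) + finShift k n (fun i => (x i).2) := rfl

lemma shiftSum_inl (x : Fin (n + 1) → k) : shiftSum k n (fun i => (x i, 0)) = x := by
  change x + finShift k n 0 = x
  rw [map_zero, add_zero]

lemma shiftSum_inr (y : Fin (n + 1) → k) : shiftSum k n (fun i => (0, y i)) = finShift k n y :=
  zero_add _

lemma shiftGraph_injective : Function.Injective (shiftGraph k n) :=
  fun _ _ h => funext fun i => congrArg Prod.snd (congrFun h i)

lemma shiftSum_surjective : Function.Surjective (shiftSum k n) :=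
  fun x => ⟨_, shiftSum_inl x⟩

lemma range_shiftGraph : LinearMap.range (shiftGraph k n) = LinearMap.ker (shiftSum k n) := by
  ext z
  rw [LinearMap.mem_range, LinearMap.mem_ker, shiftSum_apply]
  constructor
  · rintro ⟨y, rfl⟩
    ext i
    simp
  · intro hz
    refine ⟨fun i => (z i).2, funext fun i => ?_⟩
    rw [shiftGraph_apply, ← eq_neg_of_add_eq_zero_left (congrFun hz i)]

end Shift

instance (n : ℕ) : Subsingleton ((P3 k).dsum ((P4 k).dpow n)).V1 :=
  inferInstanceAs (Subsingleton ((Fin 0 → k) × (Fin n → Fin 0 → k)))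

instance (n : ℕ) : Subsingleton ((P3 k).dsum ((P4 k).dpow n)).V2 :=
  inferInstanceAs (Subsingleton ((Fin 0 → k) × (Fin n → Fin 0 → k)))

variable (k) in
noncomputable def Mrep (n : ℕ) : QRep k where
  V1 := Fin (n + 1) → k
  V2 := Fin (n + 1) → k
  V3 := Fin n → k
  V4 := Fin (n + 1) → k
  ma := LinearMap.id
  mb := finTail k n
  mc := LinearMap.id
  md := Function.ExtendByZero.linearMap k Fin.castSucc

namespace Mrep

variable {n : ℕ}

lemma hom_ext {N : QRep k} {e e' : QHom (Mrep k n) N} (h : e.f1 = e'.f1) : e = e' := by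
  have h2 : e.f2 = e'.f2 := (LinearMap.cancel_right (g := (Mrep k n).ma) Function.surjective_id).mp
    (by rw [e.comm_a, e'.comm_a, h])
  have h3 : e.f3 = e'.f3 := (LinearMap.cancel_right (g := (Mrep k n).mb) finTail_surjective).mp
    (by rw [e.comm_b, e'.comm_b, h])
  have h4 : e.f4 = e'.f4 := (LinearMap.cancel_right (g := (Mrep k n).mc) Function.surjective_id).mp
    (by rw [e.comm_c, e'.comm_c, h2])
  exact QHom.ext h h2 h3 h4

lemma commute_finShift (e : QHom (Mrep k n) (Mrep k n)) : Commute e.f1 (finShift k n) := by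
  refine LinearMap.ext fun x => ?_
  have h14 : e.f1 (finShift k n x) = e.f4 ((Mrep k n).md (finTail k n x)) :=
    ((LinearMap.congr_fun e.comm_c _).trans (LinearMap.congr_fun e.comm_a _)).symm
  have h43 : e.f4 ((Mrep k n).md (finTail k n x)) = (Mrep k n).md (e.f3 (finTail k n x)) :=
    LinearMap.congr_fun e.comm_d _
  have h31 : e.f3 (finTail k n x) = finTail k n (e.f1 x) := LinearMap.congr_fun e.comm_b x
  exact h14.trans (h43.trans (congrArg _ h31))

lemma f1_eq_zero_or_eq_one {e : QHom (Mrep k n) (Mrep k n)} (he : e.comp e = e) :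
    e.f1 = 0 ∨ e.f1 = 1 :=
  Module.End.eq_zero_or_eq_one_of_isIdempotentElem isNilpotent_finShift ker_finShift_le
    (congrArg QHom.f1 he) (commute_finShift e)

theorem indecomposable : (Mrep k n).Indecomposable :=
  QRep.indecomposable_of_forall_idempotent (M := Mrep k n)
    (fun h => not_subsingleton (Fin (n + 1) → k) h.1)
    fun _ he => (f1_eq_zero_or_eq_one he).imp hom_ext hom_ext

variable (k n) in
noncomputable def cover : QHom ((P1 k).dpow (n + 1)) (Mrep k n) where
  f1 := LinearMap.id
  f2 := LinearMap.id
  f3 := finTail k n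
  f4 := shiftSum k n
  comm_a := rfl
  comm_b := rfl
  comm_c := LinearMap.ext (shiftSum_inl (k := k))
  comm_d := LinearMap.ext (shiftSum_inr (k := k))

variable (k n) in
noncomputable def syzygy : QHom ((P3 k).dsum ((P4 k).dpow n)) ((P1 k).dpow (n + 1)) where
  f1 := 0
  f2 := 0
  f3 := ((Fin.consLinearEquiv k fun _ => k).toLinearMap ∘ₗ LinearMap.inl k k _) ∘ₗ
    LinearMap.fst k k _
  f4 := shiftGraph k n ∘ₗ (Fin.consLinearEquiv k fun _ => k).toLinearMap
  comm_a := Subsingleton.elim _ _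
  comm_b := Subsingleton.elim _ _
  comm_c := Subsingleton.elim _ _
  comm_d := LinearMap.ext fun (x : k × (Fin n → Fin 0 → k)) => funext fun i => by
    change shiftGraph k n (Fin.cons x.1 0) i = ((0 : k), Fin.cons (α := fun _ => k) x.1 0 i)
    rw [shiftGraph_apply, finShift_cons_zero, Pi.zero_apply, neg_zero]

theorem shortExact : QShortExact (syzygy k n) (cover k n) := by
  refine ⟨⟨Function.injective_of_subsingleton _, Function.injective_of_subsingleton _, ?_, ?_⟩,
    ⟨Function.surjective_id, Function.surjective_id, finTail_surjective, shiftSum_surjective⟩,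
    LinearMap.range_zero.trans LinearMap.ker_id.symm,
    LinearMap.range_zero.trans LinearMap.ker_id.symm, ?_, ?_⟩
  · exact ((Fin.consLinearEquiv k fun _ => k).injective.comp
      (LinearMap.inl_injective (R := k) (M₂ := Fin n → k))).comp
      (Prod.fst_injective (α := k) (β := Fin n → Fin 0 → k))
  · exact shiftGraph_injective.comp (LinearEquiv.injective _)
  · exact (LinearMap.range_comp_of_range_eq_top _
      (LinearMap.range_eq_top_of_surjective _ Prod.fst_surjective)).trans ker_finTail.symm
  · exact (LinearMap.range_comp_of_range_eq_top _ (LinearEquiv.range _)).trans range_shiftGraph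

end Mrep

/-- there is an indecomposable representation `M` of `Q` with the
given dimension vector together with a short exact sequence as indicated. -/
theorem stmt10 (k : Type) [Field k] (n : ℕ) :
    ∃ M : QRep k, M.Indecomposable ∧
      Module.finrank k M.V1 = n+1 ∧ Module.finrank k M.V2 = n+1 ∧
      Module.finrank k M.V3 = n ∧ Module.finrank k M.V4 = n+1 ∧
      ∃ (f : QHom ((P3 k).dsum ((P4 k).dpow n)) ((P1 k).dpow (n+1))) (g : QHom ((P1 k).dpow (n+1)) M), QShortExact f g :=
  ⟨Mrep k n, Mrep.indecomposable, Module.finrank_fin_fun k, Module.finrank_fin_fun k,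
    Module.finrank_fin_fun k, Module.finrank_fin_fun k, Mrep.syzygy k n, Mrep.cover k n,
    Mrep.shortExact⟩
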